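/- arXiv:1709.04832 — 8 statements merged into one kernel-verified Lean document; each statement's English description precedes it below -/
import Mathlib

section
/- Let (L,∀) be a monadic NM-algebra. Then for all x, y ∈ L: (1) ∀0 = 0; (2) ∀1 = 1; (3) ∀∀x = ∀x; (4) if x ≤ y then ∀x ≤ ∀y; (5) ∀(x → y) ≤ ∀x → ∀y; (6) ∀x ≤ y if and only if ∀x ≤ ∀y; (7) ∀(∀x → ∀y) = ∀x → ∀y; (8) ∀¬∀x = ¬∀x; (9) ∀(x ∧ y) = ∀x ∧ ∀y; (10) ∀x ⊙ ∀y ≤ ∀(x ⊙ y); (11) ∀(∀x ⊕ ∀y) = ∀x ⊕ ∀y; (12) ∀x ⊕ ∀y ≤ ∀(x ⊕ y); (13) ∀(∀x ⊙ ∀y) = ∀x ⊙ ∀y. -/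
/-- An NM-algebra: a bounded lattice with a commutative monoid operation `odot`
(unit `⊤`) and a residuated implication `imp`, satisfying prelinearity, the weak
nilpotent minimum identity and involution of the negation `nneg x = imp x ⊥`. -/
class NMAlgebra (L : Type*) extends Lattice L, BoundedOrder L where
  odot : L → L → L
  imp : L → L → L
  odot_comm : ∀ x y : L, odot x y = odot y x
  odot_assoc : ∀ x y z : L, odot (odot x y) z = odot x (odot y z)
  odot_top : ∀ x : L, odot x ⊤ = x
  residuation : ∀ x y z : L, odot x y ≤ z ↔ x ≤ imp y z
  prelinearity : ∀ x y : L, imp x y ⊔ imp y x = ⊤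
  wnm : ∀ x y : L, imp (odot x y) ⊥ ⊔ imp (x ⊓ y) (odot x y) = ⊤
  involution : ∀ x : L, imp (imp x ⊥) ⊥ = x

namespace NMAlgebra

variable {L : Type*} [NMAlgebra L]

/-- Negation `¬x := x → 0`. -/
def nneg (x : L) : L := imp x ⊥

/-- `x ⊕ y := ¬x → y`. -/
def oplus (x y : L) : L := imp (nneg x) y

/-- `n`-fold `⊙`-power, with `opow a 0 = ⊤`. -/
def opow (a : L) : ℕ → L
  | 0 => ⊤
  | n + 1 => odot a (opow a n)

/-- A universal quantifier on an NM-algebra: (U1)–(U4). -/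
def IsUQ (q : L → L) : Prop :=
  (∀ x : L, q x ≤ x) ∧
  (∀ x y : L, q (imp (nneg x) (q y)) = imp (nneg (q x)) (q y)) ∧
  (∀ x y : L, q (imp (q x) y) = imp (q x) (q y)) ∧
  (∀ x y : L, q (x ⊔ q y) = q x ⊔ q y)

/-- A strong universal quantifier on an NM-algebra: (U1),(U2),(U3),(U4'). -/
def IsStrongUQ (q : L → L) : Prop :=
  (∀ x : L, q x ≤ x) ∧
  (∀ x y : L, q (imp (nneg x) (q y)) = imp (nneg (q x)) (q y)) ∧
  (∀ x y : L, q (imp (q x) y) = imp (q x) (q y)) ∧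
  (∀ x y : L, q (x ⊔ y) = q x ⊔ q y)

/-- A filter of an NM-algebra: nonempty, closed under `⊙` and upward closed. -/
def IsNMFilter (F : Set L) : Prop :=
  F.Nonempty ∧ (∀ x ∈ F, ∀ y ∈ F, odot x y ∈ F) ∧ ∀ x ∈ F, ∀ y : L, x ≤ y → y ∈ F

/-- A monadic filter of `(L, q)`: a filter closed under `q`. -/
def IsMonadicFilter (q : L → L) (F : Set L) : Prop :=
  IsNMFilter F ∧ ∀ x ∈ F, q x ∈ F

/-- The smallest monadic filter containing `X`. -/
def genMF (q : L → L) (X : Set L) : Set L :=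
  ⋂₀ {F : Set L | IsMonadicFilter q F ∧ X ⊆ F}

/-- The smallest filter containing `X`. -/
def genF (X : Set L) : Set L :=
  ⋂₀ {F : Set L | IsNMFilter F ∧ X ⊆ F}

/-- A filter of the subalgebra carried by `S ⊆ L`: a nonempty subset of `S`
closed under `⊙` and upward closed within `S`. -/
def IsFilterOn (S : Set L) (G : Set L) : Prop :=
  G ⊆ S ∧ G.Nonempty ∧ (∀ x ∈ G, ∀ y ∈ G, odot x y ∈ G) ∧
    ∀ x ∈ G, ∀ y ∈ S, x ≤ y → y ∈ G

/-- A prime monadic filter: a proper monadic filter `P` such that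
`F₁ ∩ F₂ ⊆ P` implies `F₁ ⊆ P` or `F₂ ⊆ P` for monadic filters `F₁, F₂`. -/
def IsPrimeMF (q : L → L) (P : Set L) : Prop :=
  IsMonadicFilter q P ∧ P ≠ Set.univ ∧
    ∀ F₁ F₂ : Set L, IsMonadicFilter q F₁ → IsMonadicFilter q F₂ →
      F₁ ∩ F₂ ⊆ P → F₁ ⊆ P ∨ F₂ ⊆ P

/-- A prime filter: a proper filter `P` with `x ⊔ y ∈ P → x ∈ P ∨ y ∈ P`. -/
def IsPrimeF (P : Set L) : Prop :=
  IsNMFilter P ∧ P ≠ Set.univ ∧ ∀ x y : L, x ⊔ y ∈ P → x ∈ P ∨ y ∈ P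

/-- A monadic congruence on `(L, q)`: an equivalence relation compatible with
`⊓`, `⊔`, `⊙`, `→` and with `q`. -/
def IsMonadicCong (q : L → L) (θ : L → L → Prop) : Prop :=
  Equivalence θ ∧
  (∀ a b c d : L, θ a b → θ c d → θ (a ⊓ c) (b ⊓ d)) ∧
  (∀ a b c d : L, θ a b → θ c d → θ (a ⊔ c) (b ⊔ d)) ∧
  (∀ a b c d : L, θ a b → θ c d → θ (odot a c) (odot b d)) ∧
  (∀ a b c d : L, θ a b → θ c d → θ (imp a c) (imp b d)) ∧
  ∀ a b : L, θ a b → θ (q a) (q b)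

end NMAlgebra

open NMAlgebra

namespace NMAlgebraAux

variable {L : Type*} [NMAlgebra L]

lemma res {x y z : L} : odot x y ≤ z ↔ x ≤ imp y z := residuation x y z

lemma res' {x y z : L} : odot x y ≤ z ↔ y ≤ imp x z := by
  rw [odot_comm]; exact residuation y x z

lemma odot_top' (x : L) : odot ⊤ x = x := by rw [odot_comm]; exact odot_top x

lemma le_iff_imp_eq_top {x y : L} : x ≤ y ↔ imp x y = ⊤ := by
  constructor
  · intro h
    exact le_antisymm le_top (res.mp (by rw [odot_top']; exact h))
  · intro h
    have := res.mpr (le_of_eq h.symm)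
    rwa [odot_top'] at this

lemma imp_self (x : L) : imp x x = ⊤ := le_iff_imp_eq_top.mp le_rfl

lemma odot_imp_le (x y : L) : odot (imp x y) x ≤ y := res.mpr le_rfl

lemma odot_le_odot_right {a b : L} (h : a ≤ b) (c : L) : odot c a ≤ odot c b :=
  res'.mpr (le_trans h (res'.mp le_rfl))

lemma imp_mono_right {y z : L} (h : y ≤ z) (x : L) : imp x y ≤ imp x z :=
  res.mp (le_trans (odot_imp_le x y) h)

lemma imp_anti_left {x y : L} (h : x ≤ y) (z : L) : imp y z ≤ imp x z :=
  res.mp (le_trans (odot_le_odot_right h _) (odot_imp_le y z))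

lemma imp_sup (x y z : L) : imp (x ⊔ y) z = imp x z ⊓ imp y z := by
  apply le_antisymm
  · exact le_inf (imp_anti_left le_sup_left z) (imp_anti_left le_sup_right z)
  · rw [← res, res']
    apply sup_le
    · rw [← res', res]; exact inf_le_left
    · rw [← res', res]; exact inf_le_right

lemma nneg_nneg (x : L) : nneg (nneg x) = x := involution x

lemma nneg_anti {x y : L} (h : x ≤ y) : nneg y ≤ nneg x := imp_anti_left h ⊥

lemma inf_eq_nneg (x y : L) : x ⊓ y = nneg (nneg x ⊔ nneg y) := by
  unfold nneg
  rw [imp_sup, involution, involution]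

lemma imp_odot (x y z : L) : imp (odot x y) z = imp x (imp y z) := by
  apply le_antisymm
  · rw [← res, ← res, odot_assoc]; exact odot_imp_le _ _
  · rw [← res, ← odot_assoc, res]; exact odot_imp_le _ _

lemma odot_eq (x y : L) : odot x y = nneg (imp x (nneg y)) := by
  unfold nneg
  rw [← imp_odot, involution]

end NMAlgebraAux

open NMAlgebraAux

/-- Proposition 3.7 (1)-(13): basic properties of the universal quantifier. -/
theorem monadic_nm_universal_quantifier_properties
    {L : Type*} [NMAlgebra L] (q : L → L) (hq : IsUQ q) :
    (q (⊥ : L) = ⊥) ∧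
    (q (⊤ : L) = ⊤) ∧
    (∀ x : L, q (q x) = q x) ∧
    (∀ x y : L, x ≤ y → q x ≤ q y) ∧
    (∀ x y : L, q (imp x y) ≤ imp (q x) (q y)) ∧
    (∀ x y : L, q x ≤ y ↔ q x ≤ q y) ∧
    (∀ x y : L, q (imp (q x) (q y)) = imp (q x) (q y)) ∧
    (∀ x : L, q (nneg (q x)) = nneg (q x)) ∧
    (∀ x y : L, q (x ⊓ y) = q x ⊓ q y) ∧
    (∀ x y : L, odot (q x) (q y) ≤ q (odot x y)) ∧
    (∀ x y : L, q (oplus (q x) (q y)) = oplus (q x) (q y)) ∧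
    (∀ x y : L, oplus (q x) (q y) ≤ q (oplus x y)) ∧
    (∀ x y : L, q (odot (q x) (q y)) = odot (q x) (q y)) := by
  obtain ⟨u1, u2, u3, u4⟩ := hq
  -- (1)
  have h1 : q (⊥ : L) = ⊥ := le_antisymm (u1 ⊥) bot_le
  -- (2)
  have h2 : q (⊤ : L) = ⊤ := by
    have hw : q (imp (q (⊤ : L)) (⊤ : L)) = ⊤ := by rw [u3, NMAlgebraAux.imp_self]
    have h := u4 ⊤ (imp (q (⊤ : L)) (⊤ : L))
    rw [hw] at h
    simpa using h
  -- (3)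
  have h3 : ∀ x : L, q (q x) = q x := by
    intro x
    have h := u4 ⊥ x
    simpa [h1] using h
  -- (4)
  have h4 : ∀ x y : L, x ≤ y → q x ≤ q y := by
    intro x y hxy
    have ht : imp (q x) y = ⊤ := le_iff_imp_eq_top.mp (le_trans (u1 x) hxy)
    have h := u3 x y
    rw [ht, h2] at h
    exact le_iff_imp_eq_top.mpr h.symm
  -- (5)
  have h5 : ∀ x y : L, q (imp x y) ≤ imp (q x) (q y) := by
    intro x y
    have h := h4 _ _ (imp_anti_left (u1 x) y)
    rwa [u3] at h
  -- (6)
  have h6 : ∀ x y : L, (q x ≤ y ↔ q x ≤ q y) := by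
    intro x y
    constructor
    · intro h
      have := h4 _ _ h
      rwa [h3] at this
    · intro h; exact le_trans h (u1 y)
  -- (7)
  have h7 : ∀ x y : L, q (imp (q x) (q y)) = imp (q x) (q y) := by
    intro x y
    have h := u3 x (q y)
    rwa [h3] at h
  -- (8)
  have h8 : ∀ x : L, q (nneg (q x)) = nneg (q x) := by
    intro x
    show q (imp (q x) ⊥) = imp (q x) ⊥
    rw [u3, h1]
  -- fixed points are closed under ⊔, nneg, ⊓
  have hsup : ∀ a b : L, q a = a → q b = b → q (a ⊔ b) = a ⊔ b := by
    intro a b ha hb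
    have h := u4 a b
    rw [hb] at h
    rw [h, ha]
  have hnfix : ∀ a : L, q a = a → q (nneg a) = nneg a := by
    intro a ha
    have h := h8 a
    rwa [ha] at h
  have hinf : ∀ a b : L, q a = a → q b = b → q (a ⊓ b) = a ⊓ b := by
    intro a b ha hb
    rw [inf_eq_nneg]
    exact hnfix _ (hsup _ _ (hnfix _ ha) (hnfix _ hb))
  -- (9)
  have h9 : ∀ x y : L, q (x ⊓ y) = q x ⊓ q y := by
    intro x y
    apply le_antisymm
    · exact le_inf (h4 _ _ inf_le_left) (h4 _ _ inf_le_right)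
    · have hfix : q (q x ⊓ q y) = q x ⊓ q y := hinf _ _ (h3 x) (h3 y)
      have := h4 _ _ (inf_le_inf (u1 x) (u1 y))
      rwa [hfix] at this
  -- (10)
  have h10 : ∀ x y : L, odot (q x) (q y) ≤ q (odot x y) := by
    intro x y
    have hy : y ≤ imp x (odot x y) := res'.mp le_rfl
    have := le_trans (h4 _ _ hy) (h5 x (odot x y))
    exact res'.mpr this
  -- (11)
  have h11 : ∀ x y : L, q (oplus (q x) (q y)) = oplus (q x) (q y) := by
    intro x y
    show q (imp (nneg (q x)) (q y)) = imp (nneg (q x)) (q y)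
    have h := u2 (q x) y
    rwa [h3] at h
  -- (12)
  have h12 : ∀ x y : L, oplus (q x) (q y) ≤ q (oplus x y) := by
    intro x y
    show imp (nneg (q x)) (q y) ≤ q (imp (nneg x) y)
    have hk := u3 (nneg (q x)) y
    rw [h8] at hk
    rw [← hk]
    exact h4 _ _ (imp_anti_left (nneg_anti (u1 x)) y)
  -- (13)
  have h13 : ∀ x y : L, q (odot (q x) (q y)) = odot (q x) (q y) := by
    intro x y
    rw [odot_eq]
    apply hnfix
    have h := u3 x (nneg (q y))
    rwa [h8] at h
  exact ⟨h1, h2, h3, h4, h5, h6, h7, h8, h9, h10, h11, h12, h13⟩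
end

section
/- Let (L,∀) be a monadic NM-algebra. Then the image ∀L of the map ∀ equals the set of fixed points L_∀ = {x ∈ L | ∀x = x}, and ∀L is a subalgebra of L: it contains 0 and 1 and is closed under ∧, ∨, ⊙, →, and ∀. -/
open NMAlgebra

section Aux

variable {L : Type*} [NMAlgebra L]

private lemma aux_top_odot (x : L) : odot ⊤ x = x := by
  rw [odot_comm, odot_top]

private lemma aux_imp_self (x : L) : imp x x = (⊤ : L) :=
  le_antisymm le_top ((residuation ⊤ x x).mp (by rw [aux_top_odot]))

private lemma aux_le_nneg {a b : L} : a ≤ nneg b ↔ b ≤ nneg a := by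
  unfold nneg
  rw [← residuation, ← residuation, odot_comm]

private lemma aux_nneg_nneg (a : L) : nneg (nneg a) = a := involution a

private lemma aux_nneg_antitone {a b : L} (h : a ≤ b) : nneg b ≤ nneg a :=
  aux_le_nneg.mpr (by rw [aux_nneg_nneg]; exact h)

private lemma aux_nneg_sup (a b : L) : nneg (a ⊔ b) = nneg a ⊓ nneg b := by
  apply le_antisymm
  · exact le_inf (aux_nneg_antitone le_sup_left) (aux_nneg_antitone le_sup_right)
  · apply aux_le_nneg.mpr
    exact sup_le (aux_le_nneg.mpr inf_le_left) (aux_le_nneg.mpr inf_le_right)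

private lemma aux_inf_eq (a b : L) : a ⊓ b = nneg (nneg a ⊔ nneg b) := by
  rw [aux_nneg_sup, aux_nneg_nneg, aux_nneg_nneg]

private lemma aux_imp_nneg (x y : L) : imp x (nneg y) = nneg (odot x y) := by
  have key : ∀ z : L, z ≤ imp x (nneg y) ↔ z ≤ nneg (odot x y) := by
    intro z
    unfold nneg
    rw [← residuation, ← residuation, ← residuation, odot_assoc]
  exact le_antisymm ((key _).mp le_rfl) ((key _).mpr le_rfl)

private lemma aux_odot_eq (x y : L) : odot x y = nneg (imp x (nneg y)) := by
  rw [aux_imp_nneg, aux_nneg_nneg]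

private lemma aux_bot_imp (x : L) : imp (⊥ : L) x = ⊤ :=
  le_antisymm le_top ((residuation ⊤ ⊥ x).mp (by rw [aux_top_odot]; exact bot_le))

end Aux

/-- Proposition 3.7 (14),(15): the image of `∀` equals its set of fixed points,
and it is a subalgebra of `L`. -/
theorem monadic_nm_image_eq_fixedpoints_and_subalgebra
    {L : Type*} [NMAlgebra L] (q : L → L) (hq : IsUQ q) :
    (Set.range q = {x : L | q x = x}) ∧
    ((⊥ : L) ∈ Set.range q) ∧
    ((⊤ : L) ∈ Set.range q) ∧
    (∀ x ∈ Set.range q, ∀ y ∈ Set.range q, x ⊓ y ∈ Set.range q) ∧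
    (∀ x ∈ Set.range q, ∀ y ∈ Set.range q, x ⊔ y ∈ Set.range q) ∧
    (∀ x ∈ Set.range q, ∀ y ∈ Set.range q, odot x y ∈ Set.range q) ∧
    (∀ x ∈ Set.range q, ∀ y ∈ Set.range q, imp x y ∈ Set.range q) ∧
    (∀ x ∈ Set.range q, q x ∈ Set.range q) := by
  obtain ⟨h1, h2, h3, h4⟩ := hq
  have qbot : q ⊥ = ⊥ := le_antisymm (h1 ⊥) bot_le
  have qidem : ∀ y : L, q (q y) = q y := by
    intro y
    have := h4 ⊥ y
    rwa [bot_sup_eq, qbot, bot_sup_eq] at this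
  have hfix : ∀ x ∈ Set.range q, q x = x := by
    rintro x ⟨a, rfl⟩; exact qidem a
  have hrange : Set.range q = {x : L | q x = x} := by
    ext x
    exact ⟨fun hx => hfix x hx, fun hx => ⟨x, hx⟩⟩
  have hbot : (⊥ : L) ∈ Set.range q := ⟨⊥, qbot⟩
  have htop : (⊤ : L) ∈ Set.range q := by
    refine ⟨⊤, ?_⟩
    have := h3 ⊥ ⊥
    simp only [qbot, aux_bot_imp] at this
    exact this
  have himp : ∀ x ∈ Set.range q, ∀ y ∈ Set.range q, imp x y ∈ Set.range q := by
    intro x hx y hy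
    refine ⟨imp x y, ?_⟩
    have := h3 x y
    rwa [hfix x hx, hfix y hy] at this
  have hneg : ∀ x ∈ Set.range q, nneg x ∈ Set.range q := by
    intro x hx
    exact himp x hx ⊥ hbot
  have hsup : ∀ x ∈ Set.range q, ∀ y ∈ Set.range q, x ⊔ y ∈ Set.range q := by
    intro x hx y hy
    refine ⟨x ⊔ y, ?_⟩
    have := h4 x y
    rwa [hfix x hx, hfix y hy] at this
  have hodot : ∀ x ∈ Set.range q, ∀ y ∈ Set.range q, odot x y ∈ Set.range q := by
    intro x hx y hy
    rw [aux_odot_eq]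
    exact hneg _ (himp x hx _ (hneg y hy))
  have hinf : ∀ x ∈ Set.range q, ∀ y ∈ Set.range q, x ⊓ y ∈ Set.range q := by
    intro x hx y hy
    rw [aux_inf_eq]
    exact hneg _ (hsup _ (hneg x hx) _ (hneg y hy))
  exact ⟨hrange, hbot, htop, hinf, hsup, hodot, himp,
    fun x hx => by rw [hfix x hx]; exact hx⟩
end

section
/- Let (L,∀) be a monadic NM-algebra and define ∃x := ¬∀¬x. Then for all x, y ∈ L: (1) ∃0 = 0 and ∃1 = 1; (2) x ≤ ∃x; (3) ∃∃x = ∃x; (4) if x ≤ y then ∃x ≤ ∃y; (5) ∃(∃x ⊙ ∃y) = ∃x ⊙ ∃y; (6) ∃¬∃x = ¬∃x; (7) ¬∃x ≤ ∃¬x; (8) ∃(x ∨ y) = ∃x ∨ ∃y; (9) x ≤ ∃y iff ∃x ≤ ∃y; (10) ∀∃x = ∃x and ∃∀x = ∀x; (11) ∀x = x iff ∃x = x; (12) the image ∃L equals the image ∀L; (13) (∃, ∀) forms a Galois connection on (L, ≤), i.e. ∃x ≤ y iff x ≤ ∀y. -/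
open NMAlgebra

namespace MNMAux

variable {L : Type*} [NMAlgebra L]

lemma top_odot (x : L) : odot ⊤ x = x := by rw [odot_comm]; exact odot_top x

lemma le_imp {x y z : L} (h : odot x y ≤ z) : x ≤ imp y z := (residuation x y z).mp h

lemma odot_le {x y z : L} (h : x ≤ imp y z) : odot x y ≤ z := (residuation x y z).mpr h

lemma imp_eq_top_of_le {x y : L} (h : x ≤ y) : imp x y = ⊤ :=
  le_antisymm le_top (le_imp (by rw [top_odot]; exact h))

lemma le_of_imp_eq_top {x y : L} (h : imp x y = ⊤) : x ≤ y := by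
  have := odot_le (le_of_eq h.symm : (⊤ : L) ≤ imp x y)
  rwa [top_odot] at this

lemma odot_mono_left {x x' : L} (h : x ≤ x') (y : L) : odot x y ≤ odot x' y :=
  odot_le (le_trans h (le_imp le_rfl))

lemma odot_mono_right (x : L) {y y' : L} (h : y ≤ y') : odot x y ≤ odot x y' := by
  rw [odot_comm x y, odot_comm x y']; exact odot_mono_left h x

lemma imp_mono_right (x : L) {y y' : L} (h : y ≤ y') : imp x y ≤ imp x y' :=
  le_imp (le_trans (odot_le le_rfl) h)

lemma nneg_nneg (x : L) : nneg (nneg x) = x := involution x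

lemma le_nneg_comm {x y : L} : x ≤ nneg y ↔ y ≤ nneg x := by
  unfold nneg
  rw [← residuation, ← residuation, odot_comm]

lemma nneg_anti {x y : L} (h : x ≤ y) : nneg y ≤ nneg x :=
  le_nneg_comm.mp (by rw [nneg_nneg]; exact h)

lemma nneg_top : nneg (⊤ : L) = ⊥ := by
  have h : nneg (⊤ : L) ≤ ⊥ := by
    have := odot_le (le_rfl : nneg (⊤ : L) ≤ imp ⊤ ⊥)
    rwa [odot_top] at this
  exact le_antisymm h bot_le

lemma nneg_bot : nneg (⊥ : L) = ⊤ := by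
  rw [← nneg_top, nneg_nneg]

lemma imp_nneg (a b : L) : imp a (nneg b) = nneg (odot a b) := by
  apply le_antisymm
  · apply le_imp
    rw [← odot_assoc]
    calc odot (odot (imp a (nneg b)) a) b ≤ odot (nneg b) b :=
          odot_mono_left (odot_le le_rfl) b
      _ ≤ ⊥ := odot_le le_rfl
  · apply le_imp
    apply le_imp
    rw [odot_assoc]
    exact odot_le le_rfl

lemma odot_eq_nneg_imp (a b : L) : odot a b = nneg (imp a (nneg b)) := by
  rw [imp_nneg, nneg_nneg]

lemma nneg_sup (a b : L) : nneg (a ⊔ b) = nneg a ⊓ nneg b := by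
  apply le_antisymm
  · exact le_inf (nneg_anti le_sup_left) (nneg_anti le_sup_right)
  · apply le_nneg_comm.mp
    apply sup_le
    · exact le_nneg_comm.mp inf_le_left
    · exact le_nneg_comm.mp inf_le_right

lemma nneg_inf (a b : L) : nneg (a ⊓ b) = nneg a ⊔ nneg b := by
  have h := nneg_sup (nneg a) (nneg b)
  rw [nneg_nneg, nneg_nneg] at h
  rw [← h, nneg_nneg]

lemma odot_imp_le_inf (a b : L) : odot a (imp a b) ≤ a ⊓ b := by
  apply le_inf
  · calc odot a (imp a b) ≤ odot a ⊤ := odot_mono_right a le_top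
      _ = a := odot_top a
  · rw [odot_comm]; exact odot_le le_rfl

section UQ

variable {q : L → L}

lemma q_top (hq : IsUQ q) : q (⊤ : L) = ⊤ := by
  have h := hq.2.2.1 ⊤ ⊤
  rw [imp_eq_top_of_le (le_top : q (⊤ : L) ≤ ⊤),
    imp_eq_top_of_le (le_rfl : q (⊤ : L) ≤ q ⊤)] at h
  exact h

lemma q_bot (hq : IsUQ q) : q (⊥ : L) = ⊥ := le_antisymm (hq.1 ⊥) bot_le

lemma q_idem (hq : IsUQ q) (x : L) : q (q x) = q x := by
  have h := hq.2.2.2 ⊥ x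
  rwa [bot_sup_eq, q_bot hq, bot_sup_eq] at h

lemma q_mono (hq : IsUQ q) {x y : L} (h : x ≤ y) : q x ≤ q y := by
  have h3 := hq.2.2.1 x y
  rw [imp_eq_top_of_le (le_trans (hq.1 x) h), q_top hq] at h3
  exact le_of_imp_eq_top h3.symm

lemma q_nneg_q (hq : IsUQ q) (x : L) : q (nneg (q x)) = nneg (q x) := by
  have h := hq.2.2.1 x ⊥
  rwa [q_bot hq] at h

lemma q_imp_fix (hq : IsUQ q) {u v : L} (hu : q u = u) (hv : q v = v) : q (imp u v) = imp u v := by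
  have h := hq.2.2.1 u v
  rwa [hu, hv] at h

lemma q_nneg_fix (hq : IsUQ q) {u : L} (hu : q u = u) : q (nneg u) = nneg u := by
  conv_lhs => rw [← hu]
  rw [q_nneg_q hq, hu]

lemma q_odot_fix (hq : IsUQ q) {u v : L} (hu : q u = u) (hv : q v = v) : q (odot u v) = odot u v := by
  rw [odot_eq_nneg_imp]
  exact q_nneg_fix hq (q_imp_fix hq hu (q_nneg_fix hq hv))

lemma q_inf_fix (hq : IsUQ q) {u v : L} (hu : q u = u) (hv : q v = v) : q (u ⊓ v) = u ⊓ v := by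
  apply le_antisymm (hq.1 _)
  have key : ∀ a b : L, q a = a → q b = b → imp a b ≤ imp (a ⊓ b) (q (a ⊓ b)) := by
    intro a b ha hb
    apply le_imp
    calc odot (imp a b) (a ⊓ b) ≤ odot (imp a b) a := odot_mono_right _ inf_le_left
      _ = odot a (imp a b) := odot_comm _ _
      _ = q (odot a (imp a b)) := (q_odot_fix hq ha (q_imp_fix hq ha hb)).symm
      _ ≤ q (a ⊓ b) := q_mono hq (odot_imp_le_inf a b)
  have h1 := key u v hu hv
  have h2 := key v u hv hu
  rw [inf_comm v u] at h2
  have htop : (⊤ : L) ≤ imp (u ⊓ v) (q (u ⊓ v)) := by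
    rw [← prelinearity u v]; exact sup_le h1 h2
  have := odot_le htop
  rwa [top_odot] at this

lemma q_inf (hq : IsUQ q) (a b : L) : q (a ⊓ b) = q a ⊓ q b := by
  apply le_antisymm
  · exact le_inf (q_mono hq inf_le_left) (q_mono hq inf_le_right)
  · calc q a ⊓ q b = q (q a ⊓ q b) := (q_inf_fix hq (q_idem hq a) (q_idem hq b)).symm
      _ ≤ q (a ⊓ b) := q_mono hq (inf_le_inf (hq.1 a) (hq.1 b))

end UQ

end MNMAux

open MNMAux in
/-- Proposition 3.8: properties of the existential quantifier `∃x := ¬∀¬x`. -/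
theorem monadic_nm_existential_quantifier_properties
    {L : Type*} [NMAlgebra L] (q : L → L) (hq : IsUQ q)
    (e : L → L) (he : ∀ x : L, e x = nneg (q (nneg x))) :
    (e (⊥ : L) = ⊥ ∧ e (⊤ : L) = ⊤) ∧
    (∀ x : L, x ≤ e x) ∧
    (∀ x : L, e (e x) = e x) ∧
    (∀ x y : L, x ≤ y → e x ≤ e y) ∧
    (∀ x y : L, e (odot (e x) (e y)) = odot (e x) (e y)) ∧
    (∀ x : L, e (nneg (e x)) = nneg (e x)) ∧
    (∀ x : L, nneg (e x) ≤ e (nneg x)) ∧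
    (∀ x y : L, e (x ⊔ y) = e x ⊔ e y) ∧
    (∀ x y : L, x ≤ e y ↔ e x ≤ e y) ∧
    (∀ x : L, q (e x) = e x ∧ e (q x) = q x) ∧
    (∀ x : L, q x = x ↔ e x = x) ∧
    (Set.range e = Set.range q) ∧
    (∀ x y : L, e x ≤ y ↔ x ≤ q y) := by
  have qe : ∀ x : L, q (e x) = e x := by
    intro x; rw [he]; exact q_nneg_q hq (nneg x)
  have e_fix : ∀ u : L, q u = u → e u = u := by
    intro u hu; rw [he, q_nneg_fix hq hu, nneg_nneg]
  have le_e : ∀ x : L, x ≤ e x := by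
    intro x; rw [he]; exact le_nneg_comm.mpr (hq.1 (nneg x))
  have e_mono : ∀ x y : L, x ≤ y → e x ≤ e y := by
    intro x y h; rw [he, he]; exact nneg_anti (q_mono hq (nneg_anti h))
  have e_idem : ∀ x : L, e (e x) = e x := fun x => e_fix _ (qe x)
  refine ⟨⟨?_, ?_⟩, le_e, e_idem, e_mono, ?_, ?_, ?_, ?_, ?_, ?_, ?_, ?_, ?_⟩
  · rw [he, nneg_bot, q_top hq, nneg_top]
  · rw [he, nneg_top, q_bot hq, nneg_bot]
  · intro x y
    exact e_fix _ (q_odot_fix hq (qe x) (qe y))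
  · intro x
    exact e_fix _ (q_nneg_fix hq (qe x))
  · intro x
    rw [he x, nneg_nneg]
    exact le_trans (hq.1 _) (le_e (nneg x))
  · intro x y
    rw [he, he, he, nneg_sup, q_inf hq, nneg_inf]
  · intro x y
    constructor
    · intro h
      calc e x ≤ e (e y) := e_mono _ _ h
        _ = e y := e_idem y
    · intro h; exact le_trans (le_e x) h
  · intro x
    exact ⟨qe x, e_fix _ (q_idem hq x)⟩
  · intro x
    constructor
    · intro h; rw [← h]; exact e_fix _ (by rw [h]; exact h)
    · intro h; rw [← h]; rw [qe x, h]
  · ext z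
    constructor
    · rintro ⟨y, rfl⟩; exact ⟨e y, qe y⟩
    · rintro ⟨y, rfl⟩; exact ⟨q y, e_fix _ (q_idem hq y)⟩
  · intro x y
    constructor
    · intro h
      calc x ≤ e x := le_e x
        _ = q (e x) := (qe x).symm
        _ ≤ q y := q_mono hq h
    · intro h
      calc e x ≤ e (q y) := e_mono _ _ h
        _ = q y := e_fix _ (q_idem hq y)
        _ ≤ y := hq.1 y
end

section
/- Let L be an NM-algebra and ∀ : L → L a map, and define ∃x := ¬∀¬x. Then ∀ satisfies the axioms (U1) ∀x ≤ x, (U2) ∀(¬x → ∀y) = ¬∀x → ∀y, (U3) ∀(∀x → y) = ∀x → ∀y, (U4) ∀(x ∨ ∀y) = ∀x ∨ ∀y, if and only if the pair (∀, ∃) satisfies (W1) ∀x ≤ x, (W2) x ≤ ∃x, (W3) ∀(x → ∀y) = ∃x → ∀y, (W4) ∀(∃x → y) = ∃x → ∀y, (W5) ∀(x ∨ ∃y) = ∀x ∨ ∃y, for all x, y ∈ L. -/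
open NMAlgebra

section Aux

variable {L : Type*} [NMAlgebra L]

lemma nneg_nneg (x : L) : nneg (nneg x) = x := involution x

lemma odot_mono_left {a b : L} (c : L) (h : a ≤ b) : odot a c ≤ odot b c :=
  (residuation a c (odot b c)).mpr
    (h.trans ((residuation b c (odot b c)).mp le_rfl))

lemma imp_top_eq (z : L) : imp (⊤ : L) z = z := by
  apply le_antisymm
  · have := (residuation (imp (⊤ : L) z) ⊤ z).mpr le_rfl
    rwa [odot_top] at this
  · exact (residuation z ⊤ z).mp (by rw [odot_top])

lemma odot_nneg_self (x : L) : odot (nneg x) x ≤ ⊥ :=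
  (residuation (nneg x) x ⊥).mpr le_rfl

lemma imp_le_contra (x y : L) : imp x y ≤ imp (nneg y) (nneg x) := by
  show imp x y ≤ imp (nneg y) (imp x ⊥)
  apply (residuation _ _ _).mp
  apply (residuation _ _ _).mp
  have heq : odot (odot (imp x y) (nneg y)) x = odot (odot (imp x y) x) (nneg y) := by
    rw [odot_assoc, odot_assoc, odot_comm (nneg y) x]
  rw [heq]
  have h1 : odot (imp x y) x ≤ y := (residuation _ _ _).mpr le_rfl
  have h2 : odot (odot (imp x y) x) (nneg y) ≤ odot y (nneg y) := odot_mono_left _ h1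
  refine h2.trans ?_
  rw [odot_comm]
  exact odot_nneg_self y

lemma contrapose (x y : L) : imp x y = imp (nneg y) (nneg x) := by
  apply le_antisymm (imp_le_contra x y)
  have := imp_le_contra (nneg y) (nneg x)
  rwa [nneg_nneg, nneg_nneg] at this

lemma nneg_bot : nneg (⊥ : L) = ⊤ := by
  apply le_antisymm le_top
  exact (residuation ⊤ ⊥ ⊥).mp (by rw [odot_comm, odot_top])

lemma nneg_top : nneg (⊤ : L) = ⊥ := imp_top_eq ⊥

lemma nneg_antitone {x y : L} (h : x ≤ y) : nneg y ≤ nneg x := by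
  show nneg y ≤ imp x ⊥
  apply (residuation _ _ _).mp
  have h1 : odot (nneg y) x ≤ odot (nneg y) y := by
    rw [odot_comm (nneg y) x, odot_comm (nneg y) y]
    exact odot_mono_left _ h
  exact h1.trans (odot_nneg_self y)

end Aux

/-- Theorem 3.10: the axiom sets (U1)-(U4) and (W1)-(W5) are equivalent,
where `∃x := ¬∀¬x`. -/
theorem monadic_nm_U_axioms_iff_W_axioms
    {L : Type*} [NMAlgebra L] (q : L → L)
    (e : L → L) (he : ∀ x : L, e x = nneg (q (nneg x))) :
    ((∀ x : L, q x ≤ x) ∧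
     (∀ x y : L, q (imp (nneg x) (q y)) = imp (nneg (q x)) (q y)) ∧
     (∀ x y : L, q (imp (q x) y) = imp (q x) (q y)) ∧
     (∀ x y : L, q (x ⊔ q y) = q x ⊔ q y))
    ↔
    ((∀ x : L, q x ≤ x) ∧
     (∀ x : L, x ≤ e x) ∧
     (∀ x y : L, q (imp x (q y)) = imp (e x) (q y)) ∧
     (∀ x y : L, q (imp (e x) y) = imp (e x) (q y)) ∧
     (∀ x y : L, q (x ⊔ e y) = q x ⊔ e y)) := by
  constructor
  · rintro ⟨u1, u2, u3, u4⟩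
    have qbot : q ⊥ = ⊥ := le_antisymm (u1 ⊥) bot_le
    have qe : ∀ y : L, q (e y) = e y := by
      intro y
      rw [he]
      have h := u3 (nneg y) ⊥
      rw [qbot] at h
      simpa [nneg] using h
    refine ⟨u1, ?_, ?_, ?_, ?_⟩
    · intro x
      rw [he]
      have h := nneg_antitone (u1 (nneg x))
      rwa [nneg_nneg] at h
    · intro x y
      have h := u2 (nneg x) y
      rwa [nneg_nneg, ← he] at h
    · intro x y
      rw [he]
      rw [contrapose (nneg (q (nneg x))) y, nneg_nneg]
      rw [u2 y (nneg x)]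
      rw [contrapose (nneg (q (nneg x))) (q y), nneg_nneg]
    · intro x y
      conv_lhs => rw [← qe y]
      rw [u4 x (e y), qe y]
  · rintro ⟨w1, w2, w3, w4, w5⟩
    have qbot : q ⊥ = ⊥ := le_antisymm (w1 ⊥) bot_le
    have qe : ∀ y : L, q (e y) = e y := by
      intro y
      have h := w5 ⊥ y
      rwa [qbot, bot_sup_eq] at h
    have etop : e (⊤ : L) = ⊤ := by rw [he, nneg_top, qbot, nneg_bot]
    have e_nneg : ∀ x : L, e (nneg x) = nneg (q x) := by
      intro x; rw [he, nneg_nneg]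
    have key : ∀ y : L, e (nneg (e (nneg y))) = q y := by
      intro y
      rw [he, nneg_nneg, qe, e_nneg, nneg_nneg]
    refine ⟨w1, ?_, ?_, ?_⟩
    · intro x y
      have h := w3 (nneg x) y
      rwa [e_nneg] at h
    · intro x y
      have h1 : imp (q x) y = imp (nneg y) (q (e (nneg x))) := by
        rw [qe (nneg x), e_nneg]; exact contrapose (q x) y
      calc q (imp (q x) y) = q (imp (nneg y) (q (e (nneg x)))) := by rw [h1]
        _ = imp (e (nneg y)) (q (e (nneg x))) := w3 _ _
        _ = imp (nneg (q y)) (nneg (q x)) := by rw [e_nneg, qe, e_nneg]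
        _ = imp (q x) (q y) := (contrapose (q x) (q y)).symm
    · intro x y
      rw [← key y]
      exact w5 x _
end

section
/- Let (L,∀) be a monadic NM-algebra and a, b ∈ L. Then: (1) ⟨a⟩_∀ = {x ∈ L | x ≥ (∀a)ⁿ for some n ≥ 1}, where (∀a)ⁿ is the n-fold ⊙-power of ∀a; (2) if a ≤ b then ⟨b⟩_∀ ⊆ ⟨a⟩_∀; (3) ⟨∀a⟩_∀ = ⟨a⟩_∀; (4) the join ⟨a⟩_∀ ∨ ⟨b⟩_∀ in the lattice of monadic filters (i.e. the monadic filter generated by ⟨a⟩_∀ ∪ ⟨b⟩_∀) equals ⟨a ∧ b⟩_∀ and equals ⟨a ⊙ b⟩_∀. -/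
namespace NMAlgebra

variable {L : Type*} [NMAlgebra L]

lemma odot_le_odot {x x' y y' : L} (hx : x ≤ x') (hy : y ≤ y') :
    odot x y ≤ odot x' y' := by
  have h1 : odot x y ≤ odot x' y := by
    refine (residuation _ _ _).2 (hx.trans ?_)
    exact (residuation _ _ _).1 (le_refl (odot x' y))
  have h2 : odot x' y ≤ odot x' y' := by
    rw [odot_comm x' y, odot_comm x' y']
    refine (residuation _ _ _).2 (hy.trans ?_)
    exact (residuation _ _ _).1 (le_refl (odot y' x'))
  exact h1.trans h2

lemma top_odot (x : L) : odot ⊤ x = x := by rw [odot_comm, odot_top]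

lemma odot_le_left (x y : L) : odot x y ≤ x := by
  calc odot x y ≤ odot x ⊤ := odot_le_odot le_rfl le_top
  _ = x := odot_top x

lemma odot_le_right (x y : L) : odot x y ≤ y := by
  rw [odot_comm]; exact odot_le_left y x

lemma le_of_imp_eq_top {x y : L} (h : imp x y = ⊤) : x ≤ y := by
  have := (residuation (⊤ : L) x y).2 (h ▸ le_rfl)
  rwa [top_odot] at this

lemma imp_eq_top_of_le {x y : L} (h : x ≤ y) : imp x y = ⊤ := by
  refine le_antisymm le_top ((residuation _ _ _).1 ?_)
  rw [top_odot]; exact h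

lemma imp_imp_bot (u v : L) : imp u (imp v ⊥) = imp (odot u v) ⊥ := by
  apply le_antisymm
  · refine (residuation _ _ _).1 ?_
    rw [← odot_assoc]
    have h1 : odot (imp u (imp v ⊥)) u ≤ imp v ⊥ :=
      (residuation _ _ _).2 le_rfl
    have h2 : odot (imp v ⊥) v ≤ (⊥ : L) := (residuation _ _ _).2 le_rfl
    exact (odot_le_odot h1 le_rfl).trans h2
  · refine (residuation _ _ _).1 ((residuation _ _ _).1 ?_)
    rw [odot_assoc]
    exact (residuation _ _ _).2 le_rfl

lemma nneg_nneg (x : L) : nneg (nneg x) = x := involution x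

section UQ

variable {q : L → L} (hq : IsUQ q)
include hq

lemma uq_le (x : L) : q x ≤ x := hq.1 x

lemma uq_bot : q (⊥ : L) = ⊥ := le_antisymm (hq.1 ⊥) bot_le

lemma uq_top : q (⊤ : L) = ⊤ := by
  have h := hq.2.2.1 ⊤ ⊤
  rw [imp_eq_top_of_le le_top, imp_eq_top_of_le (le_refl (q ⊤))] at h
  exact h

lemma uq_idem (x : L) : q (q x) = q x := by
  have h := hq.2.2.2 ⊥ x
  rwa [bot_sup_eq, uq_bot hq, bot_sup_eq] at h

lemma uq_mono {x y : L} (h : x ≤ y) : q x ≤ q y := by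
  have h3 := hq.2.2.1 x y
  rw [imp_eq_top_of_le ((hq.1 x).trans h), uq_top hq] at h3
  exact le_of_imp_eq_top h3.symm

lemma uq_fix_nneg {x : L} (h : q x = x) : q (nneg x) = nneg x := by
  have h3 := hq.2.2.1 x ⊥
  rw [uq_bot hq, h] at h3
  exact h3

lemma uq_fix_odot {x y : L} (hx : q x = x) (hy : q y = y) :
    q (odot x y) = odot x y := by
  have hs : q (imp x (nneg y)) = imp x (nneg y) := by
    have h3 := hq.2.2.1 x (nneg y)
    rw [uq_fix_nneg hq hy, hx] at h3
    exact h3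
  have hns := uq_fix_nneg hq hs
  rw [show nneg (imp x (nneg y)) = odot x y from ?_] at hns
  · exact hns
  · show imp (imp x (imp y ⊥)) ⊥ = odot x y
    rw [imp_imp_bot]
    exact involution _

lemma uq_fix_opow (a : L) : ∀ n : ℕ, q (opow (q a) n) = opow (q a) n
  | 0 => uq_top hq
  | n + 1 => uq_fix_odot hq (uq_idem hq a) (uq_fix_opow a n)

end UQ

lemma opow_le_opow {a b : L} (h : a ≤ b) : ∀ n : ℕ, opow a n ≤ opow b n
  | 0 => le_rfl
  | n + 1 => odot_le_odot h (opow_le_opow h n)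

lemma opow_add (a : L) : ∀ m n : ℕ, opow a (m + n) = odot (opow a m) (opow a n)
  | 0, n => by rw [Nat.zero_add]; exact (top_odot _).symm
  | m + 1, n => by
    rw [show m + 1 + n = (m + n) + 1 from by omega]
    show odot a (opow a (m + n)) = odot (odot a (opow a m)) (opow a n)
    rw [opow_add a m n, odot_assoc]

lemma top_mem_filter {F : Set L} (h : IsNMFilter F) : (⊤ : L) ∈ F := by
  obtain ⟨⟨y, hy⟩, -, hup⟩ := h
  exact hup y hy ⊤ le_top

lemma subset_genMF (q : L → L) (X : Set L) : X ⊆ genMF q X :=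
  fun x hx => Set.mem_sInter.2 fun _ hF => hF.2 hx

lemma genMF_subset {q : L → L} {X G : Set L} (hG : IsMonadicFilter q G)
    (hXG : X ⊆ G) : genMF q X ⊆ G :=
  fun _ hx => Set.mem_sInter.1 hx G ⟨hG, hXG⟩

lemma genMF_isMF (q : L → L) (X : Set L) : IsMonadicFilter q (genMF q X) := by
  refine ⟨⟨⟨⊤, ?_⟩, ?_, ?_⟩, ?_⟩
  · exact Set.mem_sInter.2 fun F hF => top_mem_filter hF.1.1
  · intro x hx y hy
    exact Set.mem_sInter.2 fun F hF =>
      hF.1.1.2.1 x (Set.mem_sInter.1 hx F hF) y (Set.mem_sInter.1 hy F hF)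
  · intro x hx y hxy
    exact Set.mem_sInter.2 fun F hF =>
      hF.1.1.2.2 x (Set.mem_sInter.1 hx F hF) y hxy
  · intro x hx
    exact Set.mem_sInter.2 fun F hF => hF.1.2 x (Set.mem_sInter.1 hx F hF)

end NMAlgebra

namespace NMAlgebra

lemma genMF_singleton {L : Type*} [NMAlgebra L] {q : L → L} (hq : IsUQ q) (a : L) :
    genMF q {a} = {x : L | ∃ n : ℕ, 1 ≤ n ∧ opow (q a) n ≤ x} := by
  have hpow1 : opow (q a) 1 = q a := by
    show odot (q a) (opow (q a) 0) = q a
    show odot (q a) ⊤ = q a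
    exact odot_top _
  have hF : IsMonadicFilter q {x : L | ∃ n : ℕ, 1 ≤ n ∧ opow (q a) n ≤ x} := by
    refine ⟨⟨⟨⊤, 1, le_rfl, le_top⟩, ?_, ?_⟩, ?_⟩
    · rintro x ⟨m, hm, hmx⟩ y ⟨n, hn, hny⟩
      exact ⟨m + n, by omega, by rw [opow_add]; exact odot_le_odot hmx hny⟩
    · rintro x ⟨n, hn, h⟩ y hxy
      exact ⟨n, hn, h.trans hxy⟩
    · rintro x ⟨n, hn, h⟩
      exact ⟨n, hn, by rw [← uq_fix_opow hq a n]; exact uq_mono hq h⟩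
  have haF : ({a} : Set L) ⊆ {x : L | ∃ n : ℕ, 1 ≤ n ∧ opow (q a) n ≤ x} := by
    rw [Set.singleton_subset_iff]
    exact ⟨1, le_rfl, hpow1.le.trans (hq.1 a)⟩
  have hMF := genMF_isMF q ({a} : Set L)
  have haMem : a ∈ genMF q {a} := subset_genMF q {a} rfl
  have hop : ∀ n : ℕ, opow (q a) n ∈ genMF q {a} := by
    intro n
    induction n with
    | zero => exact top_mem_filter hMF.1
    | succ n ih => exact hMF.1.2.1 (q a) (hMF.2 a haMem) _ ih
  refine Set.Subset.antisymm (genMF_subset hF haF) ?_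
  rintro x ⟨n, hn, h⟩
  exact hMF.1.2.2 _ (hop n) x h

lemma genMF_singleton_anti {L : Type*} [NMAlgebra L] (q : L → L) {a b : L}
    (h : a ≤ b) : genMF q {b} ⊆ genMF q {a} := by
  refine genMF_subset (genMF_isMF q {a}) ?_
  rw [Set.singleton_subset_iff]
  exact (genMF_isMF q {a}).1.2.2 a (subset_genMF q {a} rfl) b h

end NMAlgebra

open NMAlgebra

/-- Theorem 4.4 (1),(4),(5),(6): principal monadic filters. -/
theorem monadic_nm_principal_monadic_filters
    {L : Type*} [NMAlgebra L] (q : L → L) (hq : IsUQ q) (a b : L) :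
    (genMF q {a} = {x : L | ∃ n : ℕ, 1 ≤ n ∧ opow (q a) n ≤ x}) ∧
    (a ≤ b → genMF q {b} ⊆ genMF q {a}) ∧
    (genMF q {q a} = genMF q {a}) ∧
    (genMF q (genMF q {a} ∪ genMF q {b}) = genMF q {a ⊓ b} ∧
     genMF q (genMF q {a} ∪ genMF q {b}) = genMF q {odot a b}) := by

  have hMFa := genMF_isMF q ({a} : Set L)
  have hMFb := genMF_isMF q ({b} : Set L)
  have haMem : a ∈ genMF q {a} := subset_genMF q {a} rfl
  have hbMem : b ∈ genMF q {b} := subset_genMF q {b} rfl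
  refine ⟨genMF_singleton hq a, fun h => genMF_singleton_anti q h, ?_, ?_⟩
  · -- genMF q {q a} = genMF q {a}
    refine Set.Subset.antisymm ?_ ?_
    · refine genMF_subset hMFa ?_
      rw [Set.singleton_subset_iff]
      exact hMFa.2 a haMem
    · refine genMF_subset (genMF_isMF q {q a}) ?_
      rw [Set.singleton_subset_iff]
      exact (genMF_isMF q {q a}).1.2.2 (q a) (subset_genMF q {q a} rfl) a (hq.1 a)
  · have hJ := genMF_isMF q (genMF q {a} ∪ genMF q {b})
    have haJ : a ∈ genMF q (genMF q {a} ∪ genMF q {b}) :=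
      subset_genMF q _ (Or.inl haMem)
    have hbJ : b ∈ genMF q (genMF q {a} ∪ genMF q {b}) :=
      subset_genMF q _ (Or.inr hbMem)
    have hodotJ : odot a b ∈ genMF q (genMF q {a} ∪ genMF q {b}) :=
      hJ.1.2.1 a haJ b hbJ
    constructor
    · refine Set.Subset.antisymm ?_ ?_
      · refine genMF_subset (genMF_isMF q {a ⊓ b}) (Set.union_subset ?_ ?_)
        · exact genMF_singleton_anti q inf_le_left
        · exact genMF_singleton_anti q inf_le_right
      · refine genMF_subset hJ ?_
        rw [Set.singleton_subset_iff]
        exact hJ.1.2.2 _ hodotJ (a ⊓ b) (le_inf (odot_le_left a b) (odot_le_right a b))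
    · refine Set.Subset.antisymm ?_ ?_
      · refine genMF_subset (genMF_isMF q {odot a b}) (Set.union_subset ?_ ?_)
        · exact genMF_singleton_anti q (odot_le_left a b)
        · exact genMF_singleton_anti q (odot_le_right a b)
      · refine genMF_subset hJ ?_
        rw [Set.singleton_subset_iff]
        exact hodotJ
end

section
/- Let (L,∀) be a monadic NM-algebra. Then the lattice of monadic filters of (L,∀), ordered by inclusion, is isomorphic to the lattice of filters of the NM-algebra L_∀ = {x ∈ L | ∀x = x}, via the mutually inverse maps F ↦ F ∩ L_∀ (from monadic filters of (L,∀) to filters of L_∀) and G ↦ ⟨G⟩ (the filter of L generated by G). -/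
open NMAlgebra

namespace NMAux

variable {L : Type*} [NMAlgebra L]

lemma le_iff_imp_top (x y : L) : x ≤ y ↔ imp x y = ⊤ := by
  constructor
  · intro h
    apply le_antisymm le_top
    rw [← residuation]
    calc odot ⊤ x = odot x ⊤ := odot_comm ⊤ x
    _ = x := odot_top x
    _ ≤ y := h
  · intro h
    have : (⊤ : L) ≤ imp x y := h.ge
    rw [← residuation] at this
    calc x = odot x ⊤ := (odot_top x).symm
    _ = odot ⊤ x := odot_comm x ⊤
    _ ≤ y := this

lemma imp_self (x : L) : imp x x = ⊤ := (le_iff_imp_top x x).mp le_rfl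

lemma curry (x y z : L) : imp (odot x y) z = imp x (imp y z) := by
  apply le_antisymm
  · rw [← residuation, ← residuation, odot_assoc]
    rw [residuation]
  · rw [← residuation]
    have h1 : odot (imp x (imp y z)) x ≤ imp y z := by
      rw [residuation]
    have h2 : odot (odot (imp x (imp y z)) x) y ≤ z := by
      rw [residuation]; exact h1
    rw [odot_assoc] at h2; exact h2

lemma odot_eq (x y : L) : odot x y = imp (imp x (imp y ⊥)) ⊥ := by
  rw [← curry, involution]

lemma odot_mono_left {a b : L} (c : L) (h : a ≤ b) : odot a c ≤ odot b c := by
  rw [residuation]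
  exact le_trans h (by rw [← residuation])

section UQ

variable {q : L → L} (hq : IsUQ q)
include hq

lemma q_bot : q ⊥ = ⊥ := le_bot_iff.mp (hq.1 ⊥)

lemma q_idem (x : L) : q (q x) = q x := by
  have h := hq.2.2.2 ⊥ x
  rw [bot_sup_eq, q_bot hq, bot_sup_eq] at h
  exact h

lemma q_top : q ⊤ = ⊤ := by
  have h := hq.2.2.1 ⊤ (q ⊤)
  rw [imp_self, q_idem hq, imp_self] at h
  exact h

lemma q_mono {x y : L} (h : x ≤ y) : q x ≤ q y := by
  have hxy : imp (q x) y = ⊤ := (le_iff_imp_top _ _).mp (le_trans (hq.1 x) h)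
  have h3 := hq.2.2.1 x y
  rw [hxy, q_top hq] at h3
  exact (le_iff_imp_top _ _).mpr h3.symm

lemma q_imp_fixed {x y : L} (hx : q x = x) (hy : q y = y) :
    q (imp x y) = imp x y := by
  have := hq.2.2.1 x y
  rw [hx, hy] at this
  exact this

lemma q_odot_fixed {x y : L} (hx : q x = x) (hy : q y = y) :
    q (odot x y) = odot x y := by
  have hb : q (⊥ : L) = ⊥ := q_bot hq
  rw [odot_eq]
  exact q_imp_fixed hq (q_imp_fixed hq hx (q_imp_fixed hq hy hb)) hb

end UQ

lemma genF_subset_up {G : Set L} (hne : G.Nonempty)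
    (hodot : ∀ x ∈ G, ∀ y ∈ G, odot x y ∈ G) :
    genF G ⊆ {y : L | ∃ x ∈ G, x ≤ y} := by
  intro y hy
  apply hy
  refine ⟨⟨⟨hne.choose, hne.choose, hne.choose_spec, le_rfl⟩, ?_, ?_⟩, ?_⟩
  · rintro a ⟨x1, hx1, hx1a⟩ b ⟨x2, hx2, hx2b⟩
    refine ⟨odot x1 x2, hodot x1 hx1 x2 hx2, ?_⟩
    calc odot x1 x2 ≤ odot a x2 := odot_mono_left x2 hx1a
    _ = odot x2 a := odot_comm a x2
    _ ≤ odot b a := odot_mono_left a hx2b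
    _ = odot a b := odot_comm b a
  · rintro a ⟨x1, hx1, hx1a⟩ b hab
    exact ⟨x1, hx1, le_trans hx1a hab⟩
  · intro x hx
    exact ⟨x, hx, le_rfl⟩

lemma subset_genF {G : Set L} : G ⊆ genF G := fun x hx F hF => hF.2 hx

lemma mem_genF {G : Set L} {y : L} (h : ∀ F : Set L, IsNMFilter F → G ⊆ F → y ∈ F) :
    y ∈ genF G := fun F hF => h F hF.1 hF.2

lemma genF_isFilter {G : Set L} (hne : G.Nonempty) : IsNMFilter (genF G) := by
  refine ⟨⟨hne.choose, subset_genF hne.choose_spec⟩, ?_, ?_⟩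
  · intro x hx y hy
    exact mem_genF fun F hF hGF => hF.2.1 x (hx F ⟨hF, hGF⟩) y (hy F ⟨hF, hGF⟩)
  · intro x hx y hxy
    exact mem_genF fun F hF hGF => hF.2.2 x (hx F ⟨hF, hGF⟩) y hxy

end NMAux

open NMAux

/-- Corollary 4.6: the lattice of monadic filters of `(L,∀)` is isomorphic to
the lattice of filters of `L_∀`, via `F ↦ F ∩ L_∀` and `G ↦ ⟨G⟩`, which are
mutually inverse and order-preserving in both directions. -/
theorem monadic_nm_monadic_filter_lattice_iso
    {L : Type*} [NMAlgebra L] (q : L → L) (hq : IsUQ q) :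
    (∀ F : Set L, IsMonadicFilter q F →
      IsFilterOn {x : L | q x = x} (F ∩ {x : L | q x = x})) ∧
    (∀ G : Set L, IsFilterOn {x : L | q x = x} G → IsMonadicFilter q (genF G)) ∧
    (∀ F : Set L, IsMonadicFilter q F → genF (F ∩ {x : L | q x = x}) = F) ∧
    (∀ G : Set L, IsFilterOn {x : L | q x = x} G →
      genF G ∩ {x : L | q x = x} = G) ∧
    (∀ F₁ F₂ : Set L, IsMonadicFilter q F₁ → IsMonadicFilter q F₂ →
      (F₁ ⊆ F₂ ↔ F₁ ∩ {x : L | q x = x} ⊆ F₂ ∩ {x : L | q x = x})) := by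
  -- part 1
  have part1 : ∀ F : Set L, IsMonadicFilter q F →
      IsFilterOn {x : L | q x = x} (F ∩ {x : L | q x = x}) := by
    intro F hF
    obtain ⟨⟨⟨a, ha⟩, hodot, hup⟩, hcl⟩ := hF
    refine ⟨Set.inter_subset_right, ⟨q a, hcl a ha, q_idem hq a⟩, ?_, ?_⟩
    · rintro x ⟨hxF, hxq⟩ y ⟨hyF, hyq⟩
      exact ⟨hodot x hxF y hyF, q_odot_fixed hq hxq hyq⟩
    · rintro x ⟨hxF, _⟩ y hyq hxy
      exact ⟨hup x hxF y hxy, hyq⟩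
  -- part 2
  have part2 : ∀ G : Set L, IsFilterOn {x : L | q x = x} G →
      IsMonadicFilter q (genF G) := by
    intro G hG
    obtain ⟨hGS, hne, hodot, _⟩ := hG
    refine ⟨genF_isFilter hne, ?_⟩
    intro y hy
    obtain ⟨x, hxG, hxy⟩ := genF_subset_up hne hodot hy
    have hx : q x = x := hGS hxG
    have : x ≤ q y := hx ▸ q_mono hq hxy
    exact (genF_isFilter hne).2.2 x (subset_genF hxG) (q y) this
  refine ⟨part1, part2, ?_, ?_, ?_⟩
  -- part 3
  · intro F hF
    apply le_antisymm
    · intro y hy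
      exact hy F ⟨hF.1, Set.inter_subset_left⟩
    · intro y hy
      have hqy : q y ∈ F ∩ {x : L | q x = x} := ⟨hF.2 y hy, q_idem hq y⟩
      intro F' hF'
      exact hF'.1.2.2 (q y) (hF'.2 hqy) y (hq.1 y)
  -- part 4
  · intro G hG
    obtain ⟨hGS, hne, hodot, hup⟩ := hG
    apply le_antisymm
    · rintro y ⟨hy, hyq⟩
      obtain ⟨x, hxG, hxy⟩ := genF_subset_up hne hodot hy
      exact hup x hxG y hyq hxy
    · intro x hx
      exact ⟨subset_genF hx, hGS hx⟩
  -- part 5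
  · intro F₁ F₂ hF₁ hF₂
    constructor
    · intro h x hx
      exact ⟨h hx.1, hx.2⟩
    · intro h x hx
      have hqx : q x ∈ F₁ ∩ {y : L | q y = y} := ⟨hF₁.2 x hx, q_idem hq x⟩
      exact hF₂.1.2.2 (q x) (h hqx).1 x (hq.1 x)
end

section
/- Let L be an NM-algebra. The following are equivalent: (1) L is representable, i.e. there exists a set S of prime filters of L whose intersection is {1}; (2) for every strong universal quantifier ∀ on L, there exists a set of prime monadic filters of (L,∀) whose intersection is {1}. -/
namespace NMAlgebra

variable {L : Type*} [NMAlgebra L]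

lemma aux_res {x y z : L} : odot x y ≤ z ↔ x ≤ imp y z := residuation x y z

lemma aux_mono_left {a b : L} (h : a ≤ b) (c : L) : odot a c ≤ odot b c :=
  aux_res.mpr (h.trans (aux_res.mp le_rfl))

lemma aux_mono {a b c d : L} (h1 : a ≤ b) (h2 : c ≤ d) : odot a c ≤ odot b d := by
  calc odot a c ≤ odot b c := aux_mono_left h1 c
    _ = odot c b := odot_comm b c
    _ ≤ odot d b := aux_mono_left h2 b
    _ = odot b d := odot_comm d b

lemma aux_top_odot (a : L) : odot ⊤ a = a := by rw [odot_comm, odot_top]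

lemma aux_odot_le_left (a b : L) : odot a b ≤ a := by
  calc odot a b ≤ odot a ⊤ := aux_mono le_rfl le_top
    _ = a := odot_top a

lemma aux_odot_le_right (a b : L) : odot a b ≤ b := by
  rw [odot_comm]; exact aux_odot_le_left b a

lemma aux_top_le_imp {a b : L} : a ≤ b ↔ ⊤ ≤ imp a b := by
  rw [← aux_res, aux_top_odot]

lemma aux_imp_self (a : L) : imp a a = ⊤ :=
  le_antisymm le_top (aux_top_le_imp.mp le_rfl)

lemma aux_imp_top (a : L) : imp a ⊤ = ⊤ :=
  le_antisymm le_top (aux_top_le_imp.mp le_top)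

lemma aux_odot_sup (a b c : L) : odot a (b ⊔ c) = odot a b ⊔ odot a c := by
  apply le_antisymm
  · rw [odot_comm]
    refine aux_res.mpr (sup_le (aux_res.mp ?_) (aux_res.mp ?_))
    · rw [odot_comm]; exact le_sup_left
    · rw [odot_comm]; exact le_sup_right
  · exact sup_le (aux_mono le_rfl le_sup_left) (aux_mono le_rfl le_sup_right)

lemma aux_sup_odot (a b c : L) : odot (a ⊔ b) c = odot a c ⊔ odot b c := by
  rw [odot_comm, aux_odot_sup, odot_comm c a, odot_comm c b]

lemma aux_odot_neg (a : L) : odot a (imp a ⊥) = ⊥ := by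
  have h : odot (imp a ⊥) a ≤ ⊥ := aux_res.mpr le_rfl
  rw [odot_comm] at h
  exact le_bot_iff.mp h

lemma aux_sq_cube (a : L) : odot (odot a a) a = odot a a := by
  set s := odot a a with hs
  have hw : imp s ⊥ ⊔ imp a s = ⊤ := by
    have h := wnm a a
    rw [inf_idem] at h
    exact h
  have hstep : odot a (imp a s) ≤ s := by
    rw [odot_comm]; exact aux_res.mpr le_rfl
  have key : s ≤ odot s a := by
    have h2 : odot s (imp a s) ≤ odot s a := by
      calc odot s (imp a s) = odot a (odot a (imp a s)) := by rw [hs, odot_assoc]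
        _ ≤ odot a s := aux_mono le_rfl hstep
        _ = odot s a := odot_comm a s
    calc s = odot s ⊤ := (odot_top s).symm
      _ = odot s (imp s ⊥ ⊔ imp a s) := by rw [hw]
      _ = odot s (imp s ⊥) ⊔ odot s (imp a s) := aux_odot_sup _ _ _
      _ = ⊥ ⊔ odot s (imp a s) := by rw [aux_odot_neg]
      _ = odot s (imp a s) := by simp
      _ ≤ odot s a := h2
  exact le_antisymm (aux_odot_le_left s a) key

lemma aux_pow4 (a : L) : odot (odot a a) (odot a a) = odot a a := by
  rw [← odot_assoc, aux_sq_cube, aux_sq_cube]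

lemma aux_sup_sq (a b : L) : odot (a ⊔ b) (a ⊔ b) ≤ odot a a ⊔ odot b b := by
  have expand : ∀ u v : L, odot (u ⊔ v) (u ⊔ v)
      = odot u u ⊔ odot v u ⊔ (odot u v ⊔ odot v v) := by
    intro u v
    rw [aux_odot_sup, aux_sup_odot, aux_sup_odot]
  have step1 : odot (a ⊔ b) (a ⊔ b) ≤ odot a a ⊔ b := by
    rw [expand]
    exact sup_le (sup_le le_sup_left ((aux_odot_le_left b a).trans le_sup_right))
      (sup_le ((aux_odot_le_right a b).trans le_sup_right)
        ((aux_odot_le_left b b).trans le_sup_right))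
  calc odot (a ⊔ b) (a ⊔ b)
      = odot (odot (a ⊔ b) (a ⊔ b)) (odot (a ⊔ b) (a ⊔ b)) := (aux_pow4 _).symm
    _ ≤ odot (odot a a ⊔ b) (odot a a ⊔ b) := aux_mono step1 step1
    _ ≤ odot a a ⊔ odot b b := by
        rw [expand]
        refine sup_le (sup_le ?_ ?_) (sup_le ?_ ?_)
        · rw [aux_pow4]; exact le_sup_left
        · exact (aux_odot_le_right b (odot a a)).trans le_sup_left
        · exact (aux_odot_le_left (odot a a) b).trans le_sup_left
        · exact le_sup_right

lemma aux_q_top {q : L → L} (hq : IsStrongUQ q) : q ⊤ = ⊤ := by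
  have h := hq.2.2.1 ⊤ ⊤
  rw [aux_imp_top] at h
  have h2 := hq.2.2.1 ⊤ (⊤ : L)
  -- q (imp (q ⊤) ⊤) = imp (q ⊤) (q ⊤)
  rw [aux_imp_top, aux_imp_self] at h2
  exact h2

lemma aux_q_mono {q : L → L} (hq : IsStrongUQ q) {x y : L} (h : x ≤ y) : q x ≤ q y := by
  have h4 := hq.2.2.2 x y
  rw [sup_eq_right.mpr h] at h4
  rw [h4]
  exact le_sup_left

lemma aux_q_idem {q : L → L} (hq : IsStrongUQ q) (x : L) : q (q x) = q x := by
  have h := hq.2.2.1 x (q x)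
  rw [aux_imp_self, aux_q_top hq] at h
  exact le_antisymm (hq.1 (q x)) (aux_top_le_imp.mpr h.le)

lemma aux_q_odot {q : L → L} (hq : IsStrongUQ q) (x y : L) :
    odot (q x) (q y) ≤ q (odot x y) := by
  set c := odot (q x) (q y) with hc
  have h1 : q y ≤ imp (q x) c := by
    refine aux_res.mp ?_
    rw [odot_comm]
  have h2 : q (q y) ≤ q (imp (q x) c) := aux_q_mono hq h1
  rw [aux_q_idem hq, hq.2.2.1] at h2
  have h3 : c ≤ q c := by
    have h4 := aux_res.mpr h2
    rw [odot_comm] at h4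
    exact h4
  calc c ≤ q c := h3
    _ ≤ q (odot x y) := aux_q_mono hq (aux_mono (hq.1 x) (hq.1 y))

instance : Std.Associative (odot : L → L → L) := ⟨odot_assoc⟩
instance : Std.Commutative (odot : L → L → L) := ⟨odot_comm⟩

lemma aux_top_mem {P : Set L} (hP : IsNMFilter P) : (⊤ : L) ∈ P := by
  obtain ⟨w, hw⟩ := hP.1
  exact hP.2.2 w hw ⊤ le_top

/-- A prime monadic filter for the identity quantifier is a prime filter. -/
lemma aux_primeMF_id {P : Set L} (h : IsPrimeMF (id : L → L) P) : IsPrimeF P := by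
  obtain ⟨⟨hF, -⟩, hne, hpr⟩ := h
  obtain ⟨hnonempty, hodot, hup⟩ := hF
  have htop : (⊤ : L) ∈ P := aux_top_mem ⟨hnonempty, hodot, hup⟩
  refine ⟨⟨hnonempty, hodot, hup⟩, hne, fun x y hxy => ?_⟩
  set F : L → Set L := fun a => {z | ∃ p ∈ P, odot (odot a a) p ≤ z} with hFdef
  have hmem : ∀ a : L, a ∈ F a := fun a =>
    ⟨⊤, htop, by rw [odot_top]; exact aux_odot_le_left a a⟩
  have hfil : ∀ a : L, IsMonadicFilter id (F a) := by
    intro a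
    refine ⟨⟨⟨a, hmem a⟩, ?_, ?_⟩, fun z hz => hz⟩
    · rintro z ⟨p, hp, hzp⟩ w ⟨p', hp', hwp⟩
      refine ⟨odot p p', hodot p hp p' hp', ?_⟩
      calc odot (odot a a) (odot p p')
          = odot (odot (odot a a) (odot a a)) (odot p p') := by rw [aux_pow4]
        _ = odot (odot (odot a a) p) (odot (odot a a) p') := by ac_rfl
        _ ≤ odot z w := aux_mono hzp hwp
    · rintro z ⟨p, hp, hzp⟩ w hzw
      exact ⟨p, hp, hzp.trans hzw⟩
  have hsubP : F x ∩ F y ⊆ P := by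
    rintro z ⟨⟨p, hp, hxp⟩, ⟨p', hp', hyp⟩⟩
    have hmemP : odot (odot (x ⊔ y) (x ⊔ y)) (odot p p') ∈ P :=
      hodot _ (hodot _ hxy _ hxy) _ (hodot _ hp _ hp')
    refine hup _ hmemP z ?_
    calc odot (odot (x ⊔ y) (x ⊔ y)) (odot p p')
        ≤ odot (odot x x ⊔ odot y y) (odot p p') := aux_mono (aux_sup_sq x y) le_rfl
      _ = odot (odot x x) (odot p p') ⊔ odot (odot y y) (odot p p') := aux_sup_odot _ _ _
      _ ≤ z ⊔ z := sup_le_sup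
          ((aux_mono le_rfl (aux_odot_le_left p p')).trans hxp)
          ((aux_mono le_rfl (aux_odot_le_right p p')).trans hyp)
      _ = z := by simp
  rcases hpr (F x) (F y) (hfil x) (hfil y) hsubP with h1 | h1
  · exact Or.inl (h1 (hmem x))
  · exact Or.inr (h1 (hmem y))

end NMAlgebra

open NMAlgebra

/-- Theorem 4.19: an NM-algebra is representable iff for every strong universal
quantifier `∀`, the monadic NM-algebra `(L,∀)` is representable. -/
theorem monadic_nm_representable_iff
    {L : Type*} [NMAlgebra L] :
    (∃ S : Set (Set L), (∀ P ∈ S, IsPrimeF P) ∧ ⋂₀ S = {(⊤ : L)}) ↔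
    (∀ q : L → L, IsStrongUQ q →
      ∃ S : Set (Set L), (∀ P ∈ S, IsPrimeMF q P) ∧ ⋂₀ S = {(⊤ : L)}) := by
  constructor
  · rintro ⟨S, hS, hInt⟩ q hq
    refine ⟨(fun P => q ⁻¹' P) '' S, ?_, ?_⟩
    · rintro P' ⟨P₀, hP₀, rfl⟩
      obtain ⟨⟨hne0, hodot0, hup0⟩, hprop0, hprime0⟩ := hS P₀ hP₀
      have htop0 : (⊤ : L) ∈ P₀ := aux_top_mem ⟨hne0, hodot0, hup0⟩
      refine ⟨⟨⟨⟨⊤, ?_⟩, ?_, ?_⟩, ?_⟩, ?_, ?_⟩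
      · show q ⊤ ∈ P₀
        rw [aux_q_top hq]; exact htop0
      · intro x hx y hy
        show q (odot x y) ∈ P₀
        exact hup0 _ (hodot0 _ hx _ hy) _ (aux_q_odot hq x y)
      · intro x hx y hxy
        exact hup0 _ hx _ (aux_q_mono hq hxy)
      · intro x hx
        show q (q x) ∈ P₀
        rw [aux_q_idem hq]; exact hx
      · intro hcontra
        apply hprop0
        have hbot : (⊥ : L) ∈ q ⁻¹' P₀ := by
          rw [show (q ⁻¹' P₀ : Set L) = Set.univ from hcontra]; trivial
        have hbot0 : (⊥ : L) ∈ P₀ := hup0 _ hbot _ (hq.1 ⊥)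
        exact Set.eq_univ_of_forall fun z => hup0 _ hbot0 _ bot_le
      · intro F₁ F₂ hF₁ hF₂ hsub
        by_contra hcon
        rcases not_or.mp hcon with ⟨h1, h2⟩
        obtain ⟨u, hu, huP⟩ := Set.not_subset.mp h1
        obtain ⟨v, hv, hvP⟩ := Set.not_subset.mp h2
        have huv : u ⊔ v ∈ F₁ ∩ F₂ :=
          ⟨hF₁.1.2.2 u hu _ le_sup_left, hF₂.1.2.2 v hv _ le_sup_right⟩
        have hqs : q (u ⊔ v) ∈ P₀ := hsub huv
        rw [hq.2.2.2] at hqs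
        rcases hprime0 _ _ hqs with h | h
        · exact huP h
        · exact hvP h
    · ext a
      simp only [Set.mem_sInter, Set.mem_image, Set.mem_singleton_iff]
      constructor
      · intro ha
        have hqa : q a ∈ ⋂₀ S := Set.mem_sInter.mpr fun P₀ hP₀ =>
          ha (q ⁻¹' P₀) ⟨P₀, hP₀, rfl⟩
        rw [hInt, Set.mem_singleton_iff] at hqa
        exact le_antisymm le_top (hqa ▸ hq.1 a)
      · rintro rfl P' ⟨P₀, hP₀, rfl⟩
        show q ⊤ ∈ P₀
        rw [aux_q_top hq]
        exact aux_top_mem (hS P₀ hP₀).1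
  · intro h
    have hid : IsStrongUQ (id : L → L) :=
      ⟨fun x => le_rfl, fun x y => rfl, fun x y => rfl, fun x y => rfl⟩
    obtain ⟨S, hS, hInt⟩ := h id hid
    exact ⟨S, fun P hP => aux_primeMF_id (hS P hP), hInt⟩
end

section
/- Let (L,∀) be a monadic NM-algebra. Then (L,∀) is subdirectly irreducible (i.e. the intersection of all monadic filters different from {1} is different from {1}) if and only if there exists an element a ∈ L with a < 1 such that for every x ∈ L with x < 1, a ∈ ⟨x⟩_∀ (equivalently, a ≥ (∀x)ⁿ for some n ≥ 1). -/
open NMAlgebra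

lemma top_mem_of_mf {L : Type*} [NMAlgebra L] {q : L → L} {F : Set L}
    (h : IsMonadicFilter q F) : (⊤ : L) ∈ F := by
  obtain ⟨⟨⟨x, hx⟩, _, hup⟩, _⟩ := h
  exact hup x hx ⊤ le_top

lemma genMF_is_mf {L : Type*} [NMAlgebra L] (q : L → L) (x : L) :
    IsMonadicFilter q (genMF q {x}) := by
  refine ⟨⟨⟨⊤, ?_⟩, ?_, ?_⟩, ?_⟩
  · intro F hF; exact top_mem_of_mf hF.1
  · intro a ha b hb F hF
    exact hF.1.1.2.1 a (ha F hF) b (hb F hF)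
  · intro a ha b hab F hF
    exact hF.1.1.2.2 a (ha F hF) b hab
  · intro a ha F hF
    exact hF.1.2 a (ha F hF)

lemma mem_genMF_self {L : Type*} [NMAlgebra L] (q : L → L) (x : L) :
    x ∈ genMF q {x} := by
  intro F hF
  exact hF.2 rfl

lemma genMF_subset {L : Type*} [NMAlgebra L] (q : L → L) {x : L} {F : Set L}
    (hF : IsMonadicFilter q F) (hx : x ∈ F) : genMF q {x} ⊆ F :=
  Set.sInter_subset_of_mem ⟨hF, by simpa using hx⟩

/-- Theorem 4.26: a monadic NM-algebra is subdirectly irreducible iff there is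
`a < 1` belonging to every `⟨x⟩_∀` with `x < 1`. -/
theorem monadic_nm_subdirectly_irreducible_iff
    {L : Type*} [NMAlgebra L] (q : L → L) (hq : IsUQ q) :
    (⋂₀ {F : Set L | IsMonadicFilter q F ∧ F ≠ {(⊤ : L)}} ≠ {(⊤ : L)}) ↔
    (∃ a : L, a < ⊤ ∧ ∀ x : L, x < ⊤ → a ∈ genMF q {x}) := by
  constructor
  · intro h
    -- The intersection contains ⊤ and is not {⊤}, so it has an element a ≠ ⊤.
    have htop : (⊤ : L) ∈ ⋂₀ {F : Set L | IsMonadicFilter q F ∧ F ≠ {(⊤ : L)}} := by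
      intro F hF; exact top_mem_of_mf hF.1
    have : ∃ a ∈ ⋂₀ {F : Set L | IsMonadicFilter q F ∧ F ≠ {(⊤ : L)}}, a ≠ ⊤ := by
      by_contra hc
      push_neg at hc
      apply h
      apply Set.eq_singleton_iff_unique_mem.mpr
      exact ⟨htop, fun a ha => hc a ha⟩
    obtain ⟨a, ha, hane⟩ := this
    refine ⟨a, lt_of_le_of_ne le_top hane, fun x hx => ?_⟩
    apply ha
    refine ⟨genMF_is_mf q x, ?_⟩
    intro heq
    have := mem_genMF_self q x
    rw [heq] at this
    exact (ne_of_lt hx) this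
  · rintro ⟨a, ha, hall⟩
    intro heq
    have hmem : a ∈ ⋂₀ {F : Set L | IsMonadicFilter q F ∧ F ≠ {(⊤ : L)}} := by
      intro F hF
      obtain ⟨hFm, hFne⟩ := hF
      have htop : (⊤ : L) ∈ F := top_mem_of_mf hFm
      have : ∃ x ∈ F, x ≠ ⊤ := by
        by_contra hc
        push_neg at hc
        exact hFne (Set.eq_singleton_iff_unique_mem.mpr ⟨htop, fun x hx => hc x hx⟩)
      obtain ⟨x, hxF, hxne⟩ := this
      exact genMF_subset q hFm hxF (hall x (lt_of_le_of_ne le_top hxne))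
    rw [heq] at hmem
    exact (ne_of_lt ha) hmem
end
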